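/- The key Chu–Vandermonde computation in the symmetry of the transported root-plugging: for k, k̄ ∈ ℕ^{d+1} and fixed tuples r ∈ (ℕ^{d+1})^n, r̄ ∈ (ℕ^{d+1})^{n̄}, Σ_{ℓ ≤ r componentwise, ℓ̄ ≤ r̄} C(k, ℓ)·C(k̄, ℓ̄)·C(k − |ℓ|; (r̄ᵢ − ℓ̄ᵢ)ᵢ)·C(k̄ − |ℓ̄|; (rᵢ − ℓᵢ)ᵢ) = C(k + k̄; r̄, r), where C(m; (sᵢ)) denotes the multinomial coefficient m!/((m − Σsᵢ)! ∏ sᵢ!) and all coefficients vanish when subtraction in ℕ^{d+1} is undefined. -/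

import Mathlib

/-- Multi-indices in `ℕ^{d+1}`. -/
abbrev Nd (d : ℕ) : Type := Fin (d + 1) → ℕ

/-- Componentwise binomial coefficient on `ℕ^{d+1}` (zero if some component exceeds). -/
def binom {d : ℕ} (n ℓ : Nd d) : ℕ := ∏ c, Nat.choose (n c) (ℓ c)

/-- Componentwise multinomial coefficient `C(m; s₁, …, s_n)` of a tuple of
multi-indices, as the iterated product of binomial coefficients
`∏ᵢ C(m − s₁ − ⋯ − s_{i−1}, sᵢ)`; it vanishes as soon as the subtractions leave
`ℕ^{d+1}` (this encodes the convention that coefficients vanish when subtraction in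
`ℕ^{d+1}` is undefined). -/
def ndMnom {d : ℕ} (m : Nd d) {n : ℕ} (L : Fin n → Nd d) : ℕ :=
  ∏ i : Fin n, binom (m - ∑ j ∈ Finset.univ.filter (· < i), L j) (L i)

/-! Expand `C(k + k̄; r̄ ++ r)` by the multi-index Chu–Vandermonde identity
`C(k + k̄; S) = Σ_{T ≤ S} C(k; T) C(k̄; S - T)` and split `T = (r̄ - ℓ̄) ++ ℓ`: the summand becomes
`C(k; (r̄ - ℓ̄) ++ ℓ) C(k̄; ℓ̄ ++ (r - ℓ))`. A multinomial coefficient of a concatenation factors as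
`C(m; A ++ B) = C(m; A) C(m - |A|; B)` and does not change when the two blocks are swapped, which
turns this summand into the one on the left. -/

open Finset

theorem Nat.choose_mul_choose_sub_comm (m a b : ℕ) :
    m.choose a * (m - a).choose b = m.choose b * (m - b).choose a := by
  rcases le_or_gt (a + b) m with h | h
  · have ha := Nat.choose_mul (n := m) (Nat.le_add_right a b)
    have hb := Nat.choose_mul (n := m) (Nat.le_add_left b a)
    rw [Nat.add_sub_cancel_left] at ha
    rw [Nat.add_sub_cancel] at hb
    rw [← ha, ← hb, Nat.choose_symm_add]
  · have hzero : ∀ x y, m < x + y → m.choose x * (m - x).choose y = 0 := fun x y hxy => by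
      simp only [mul_eq_zero, Nat.choose_eq_zero_iff]; omega
    rw [hzero a b h, hzero b a (by omega)]

theorem Nat.sum_Iic_choose_mul_choose_sub (a b s : ℕ) :
    ∑ x ∈ Iic s, a.choose x * b.choose (s - x) = (a + b).choose s := by
  rw [Nat.add_choose_eq, Finset.Nat.sum_antidiagonal_eq_sum_range_succ_mk, ← Nat.Iio_eq_range]
  rfl

section Tuples

variable {α M : Type*} [AddCommMonoid M]

theorem Finset.sum_Iic_reflect [AddCommMonoid α] [PartialOrder α] [CanonicallyOrderedAdd α]
    [Sub α] [OrderedSub α] [AddLeftReflectLE α] [LocallyFiniteOrderBot α]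
    (a : α) (f : α → α → M) : ∑ x ∈ Iic a, f x (a - x) = ∑ x ∈ Iic a, f (a - x) x := by
  have hmem (x : α) : a - x ∈ Iic a := mem_Iic.mpr tsub_le_self
  have hinv {x : α} (hx : x ∈ Iic a) : a - (a - x) = x := tsub_tsub_cancel_of_le (mem_Iic.mp hx)
  exact sum_nbij' (a - ·) (a - ·) (fun x _ => hmem x) (fun x _ => hmem x)
    (fun _ hx => hinv hx) (fun _ hx => hinv hx) (fun _ hx => by rw [hinv hx])

theorem Fin.append_le_append_iff [Preorder α] {p q : ℕ} {u U : Fin p → α} {v V : Fin q → α} :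
    Fin.append u v ≤ Fin.append U V ↔ u ≤ U ∧ v ≤ V := by
  simp only [Pi.le_def, Fin.forall_fin_add, Fin.append_left, Fin.append_right]

theorem Fin.append_sub_append [Sub α] {p q : ℕ} (u U : Fin p → α) (v V : Fin q → α) :
    Fin.append U V - Fin.append u v = Fin.append (U - u) (V - v) := by
  ext i
  refine Fin.addCases (fun i => ?_) (fun i => ?_) i <;> simp

theorem Fin.cons_sub_cons [Sub α] {n : ℕ} (x y : α) (u v : Fin n → α) :
    (Fin.cons x u : Fin (n + 1) → α) - Fin.cons y v = Fin.cons (x - y) (u - v) :=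
  Matrix.cons_sub_cons x u y v

theorem Finset.sum_Iic_append [PartialOrder α] [DecidableEq α] [LocallyFiniteOrderBot α]
    {p q : ℕ} (U : Fin p → α) (V : Fin q → α) (f : (Fin (p + q) → α) → M) :
    ∑ T ∈ Iic (Fin.append U V), f T = ∑ u ∈ Iic U, ∑ v ∈ Iic V, f (Fin.append u v) := by
  rw [← sum_product']
  refine (sum_equiv (Fin.appendEquiv p q) (fun x => ?_) (fun _ _ => rfl)).symm
  simp only [mem_product, mem_Iic]
  exact Fin.append_le_append_iff.symm

theorem Finset.sum_Iic_cons [PartialOrder α] [DecidableEq α] [LocallyFiniteOrderBot α]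
    {n : ℕ} (S : Fin (n + 1) → α) (f : (Fin (n + 1) → α) → M) :
    ∑ T ∈ Iic S, f T = ∑ t ∈ Iic (S 0), ∑ T ∈ Iic (Fin.tail S), f (Fin.cons t T) := by
  rw [← sum_product']
  refine (sum_equiv (Fin.consEquiv fun _ => α) (fun x => ?_) (fun _ _ => rfl)).symm
  simp only [mem_product, mem_Iic]
  exact (Fin.cons_le (α := fun _ => α)).symm

end Tuples

section Multinomial

variable {d : ℕ}

theorem binom_mul_binom_sub_comm (m a b : Nd d) :
    binom m a * binom (m - a) b = binom m b * binom (m - b) a := by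
  simp only [binom, ← prod_mul_distrib, Pi.sub_apply, Nat.choose_mul_choose_sub_comm]

theorem le_of_binom_ne_zero {m a : Nd d} (h : binom m a ≠ 0) : a ≤ m := fun c => by
  by_contra hc
  exact prod_ne_zero_iff.mp h c (mem_univ c) (Nat.choose_eq_zero_of_lt (not_le.mp hc))

theorem sum_Iic_binom_mul_binom_sub (k kb s : Nd d) :
    ∑ t ∈ Iic s, binom k t * binom kb (s - t) = binom (k + kb) s := by
  simp only [binom, Pi.sub_apply, Pi.add_apply, ← prod_mul_distrib,
    ← Nat.sum_Iic_choose_mul_choose_sub]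
  exact (prod_univ_sum (fun c => Iic (s c)) fun c x =>
    (k c).choose x * (kb c).choose (s c - x)).symm

@[simp]
theorem ndMnom_fin_zero (m : Nd d) (L : Fin 0 → Nd d) : ndMnom m L = 1 := by simp [ndMnom]

theorem ndMnom_cons (m a : Nd d) {n : ℕ} (L : Fin n → Nd d) :
    ndMnom m (Fin.cons a L) = binom m a * ndMnom (m - a) L := by
  simp [ndMnom, Fin.prod_univ_succ, sum_filter, Fin.sum_univ_succ, tsub_tsub]

theorem ndMnom_append (m : Nd d) {p q : ℕ} (A : Fin p → Nd d) (B : Fin q → Nd d) :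
    ndMnom m (Fin.append A B) = ndMnom m A * ndMnom (m - ∑ i, A i) B := by
  have hleft (i : Fin p) : ∑ j ∈ univ.filter (· < Fin.castAdd q i), Fin.append A B j
      = ∑ j ∈ univ.filter (· < i), A j := by
    simp only [filter_gt_eq_Iio, Fin.sum_Iio_castAdd, Fin.append_left]
  have hright (i : Fin q) : ∑ j ∈ univ.filter (· < Fin.natAdd p i), Fin.append A B j
      = ∑ j, A j + ∑ j ∈ univ.filter (· < i), B j := by
    rw [sum_filter, sum_filter, Fin.sum_univ_add]
    simp only [Fin.append_left, Fin.append_right, Fin.natAdd_lt_natAdd_iff]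
    congr 1
    exact sum_congr rfl fun j _ => if_pos (by simp [Fin.lt_def]; omega)
  simp only [ndMnom, Fin.prod_univ_add, hleft, hright, Fin.append_left, Fin.append_right, tsub_tsub]

theorem binom_mul_ndMnom_sub_comm (m a : Nd d) {q : ℕ} (B : Fin q → Nd d) :
    binom m a * ndMnom (m - a) B = ndMnom m B * binom (m - ∑ i, B i) a := by
  induction B using Fin.consInduction generalizing m with
  | elim0 => simp [mul_comm]
  | cons b B ih =>
    rw [ndMnom_cons, ndMnom_cons, Fin.sum_cons, ← tsub_tsub, ← mul_assoc,
      binom_mul_binom_sub_comm, tsub_right_comm (a := m), mul_assoc, ih, mul_assoc]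

theorem ndMnom_mul_ndMnom_sub_comm (m : Nd d) {p q : ℕ} (A : Fin p → Nd d) (B : Fin q → Nd d) :
    ndMnom m A * ndMnom (m - ∑ i, A i) B = ndMnom m B * ndMnom (m - ∑ i, B i) A := by
  induction A using Fin.consInduction generalizing m with
  | elim0 => simp
  | cons a A ih =>
    rw [ndMnom_cons, Fin.sum_cons, ← tsub_tsub, mul_assoc, ih, ← mul_assoc,
      binom_mul_ndMnom_sub_comm, tsub_right_comm (a := m), mul_assoc, ← ndMnom_cons]

theorem ndMnom_append_comm (m : Nd d) {p q : ℕ} (A : Fin p → Nd d) (B : Fin q → Nd d) :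
    ndMnom m (Fin.append A B) = ndMnom m (Fin.append B A) := by
  rw [ndMnom_append, ndMnom_append, ndMnom_mul_ndMnom_sub_comm]

theorem sum_Iic_ndMnom_mul_ndMnom_sub (k kb : Nd d) {n : ℕ} (S : Fin n → Nd d) :
    ∑ T ∈ Iic S, ndMnom k T * ndMnom kb (S - T) = ndMnom (k + kb) S := by
  induction S using Fin.consInduction generalizing k kb with
  | elim0 => simp [Pi.card_Iic]
  | cons s S ih =>
    have hhead (t : Nd d) (ht : t ≤ s) :
        binom k t * binom kb (s - t) * ndMnom (k - t + (kb - (s - t))) S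
          = binom k t * binom kb (s - t) * ndMnom (k + kb - s) S := by
      -- once both binomials are nonzero, the truncated subtractions are exact
      rcases eq_or_ne (binom k t * binom kb (s - t)) 0 with h | h
      · rw [h, zero_mul, zero_mul]
      obtain ⟨hk, hkb⟩ := mul_ne_zero_iff.mp h
      congr 2
      funext c
      have := le_of_binom_ne_zero hk c; have := le_of_binom_ne_zero hkb c; have := ht c
      simp only [Pi.add_apply, Pi.sub_apply] at *
      omega
    calc ∑ T ∈ Iic (Fin.cons s S), ndMnom k T * ndMnom kb (Fin.cons s S - T)
        = ∑ t ∈ Iic s, binom k t * binom kb (s - t)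
            * ∑ T ∈ Iic S, ndMnom (k - t) T * ndMnom (kb - (s - t)) (S - T) := by
          rw [sum_Iic_cons]
          refine sum_congr rfl fun t _ => ?_
          rw [mul_sum]
          refine sum_congr rfl fun T _ => ?_
          rw [Fin.cons_sub_cons, ndMnom_cons, ndMnom_cons]
          ring
      _ = ∑ t ∈ Iic s, binom k t * binom kb (s - t) * ndMnom (k + kb - s) S :=
          sum_congr rfl fun t ht => by rw [ih, hhead t (mem_Iic.mp ht)]
      _ = ndMnom (k + kb) (Fin.cons s S) := by
          rw [← sum_mul, sum_Iic_binom_mul_binom_sub, ndMnom_cons]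

end Multinomial

/-- **The key Chu–Vandermonde computation in the symmetry of the transported
root-plugging:** for `k, k̄ ∈ ℕ^{d+1}` and fixed tuples `r ∈ (ℕ^{d+1})^n`,
`r̄ ∈ (ℕ^{d+1})^{n̄}`,
`Σ_{ℓ ≤ r, ℓ̄ ≤ r̄} C(k,ℓ)·C(k̄,ℓ̄)·C(k−|ℓ|; (r̄ᵢ−ℓ̄ᵢ)ᵢ)·C(k̄−|ℓ̄|; (rᵢ−ℓᵢ)ᵢ)
  = C(k+k̄; r̄, r)`,
where the sums are over tuples with `ℓᵢ ≤ rᵢ`, `ℓ̄ᵢ ≤ r̄ᵢ` componentwise. -/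
theorem transported_plugging_chu_vandermonde (d n nb : ℕ) (k kb : Nd d)
    (r : Fin n → Nd d) (rb : Fin nb → Nd d) :
    (∑ ℓ ∈ Finset.Iic r, ∑ ℓb ∈ Finset.Iic rb,
        ndMnom k ℓ * ndMnom kb ℓb
          * ndMnom (k - ∑ i, ℓ i) (fun i => rb i - ℓb i)
          * ndMnom (kb - ∑ i, ℓb i) (fun i => r i - ℓ i))
      = ndMnom (k + kb) (Fin.append rb r) := by
  symm
  calc ndMnom (k + kb) (Fin.append rb r)
      = ∑ u ∈ Iic rb, ∑ ℓ ∈ Iic r,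
          ndMnom k (Fin.append u ℓ) * ndMnom kb (Fin.append (rb - u) (r - ℓ)) := by
        rw [← sum_Iic_ndMnom_mul_ndMnom_sub, sum_Iic_append]
        simp only [Fin.append_sub_append]
    _ = ∑ ℓb ∈ Iic rb, ∑ ℓ ∈ Iic r,
          ndMnom k (Fin.append (rb - ℓb) ℓ) * ndMnom kb (Fin.append ℓb (r - ℓ)) :=
        sum_Iic_reflect rb fun x y =>
          ∑ ℓ ∈ Iic r, ndMnom k (Fin.append x ℓ) * ndMnom kb (Fin.append y (r - ℓ))
    _ = ∑ ℓb ∈ Iic rb, ∑ ℓ ∈ Iic r, ndMnom k ℓ * ndMnom kb ℓb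
          * ndMnom (k - ∑ i, ℓ i) (rb - ℓb) * ndMnom (kb - ∑ i, ℓb i) (r - ℓ) := by
        refine sum_congr rfl fun ℓb _ => sum_congr rfl fun ℓ _ => ?_
        rw [ndMnom_append_comm k, ndMnom_append, ndMnom_append]
        ring
    _ = _ := sum_comm
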